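/- Let n be a natural number and N = 2n. Let A be the unital associative ℝ-algebra presented by generators x_0, …, x_{N−1} subject to the relations: x_i² = 1 for all i; x_{2k}·x_{2k+1} = −x_{2k+1}·x_{2k} for every 0 ≤ k < n; and x_i·x_j = x_j·x_i for every other pair i ≠ j (i.e., whenever {i,j} is not of the form {2k, 2k+1}). Then A is isomorphic, as an ℝ-algebra, to the matrix algebra M_{2^n}(ℝ). (This algebra A is the twisted group algebra 𝒜_ℝ(μ_0^{2n}) attached to the quadratic form q_0^{2n}(x) = x_1x_2 + x_3x_4 + ⋯ + x_{2n−1}x_{2n} over the field of two elements.) -/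

import Mathlib

/-- The relations presenting the twisted group algebra `𝒜_ℝ(μ₀^{2n})`:
generators `x_i` (`i : Fin (2n)`) with `x_i² = 1`, `x_{2k} x_{2k+1} = - x_{2k+1} x_{2k}`
for `k < n`, and `x_i x_j = x_j x_i` for every other pair `i ≠ j`. -/
inductive Rel10 (n : ℕ) : FreeAlgebra ℝ (Fin (2 * n)) → FreeAlgebra ℝ (Fin (2 * n)) → Prop
  | sq (i : Fin (2 * n)) :
      Rel10 n (FreeAlgebra.ι ℝ i * FreeAlgebra.ι ℝ i) 1
  | anti (k : ℕ) (hk : k < n) :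
      Rel10 n
        (FreeAlgebra.ι ℝ (⟨2 * k, by omega⟩ : Fin (2 * n)) *
          FreeAlgebra.ι ℝ (⟨2 * k + 1, by omega⟩ : Fin (2 * n)))
        (-(FreeAlgebra.ι ℝ (⟨2 * k + 1, by omega⟩ : Fin (2 * n)) *
          FreeAlgebra.ι ℝ (⟨2 * k, by omega⟩ : Fin (2 * n))))
  | comm (i j : Fin (2 * n)) (hij : i ≠ j)
      (h : ¬∃ k : ℕ, ((i : ℕ) = 2 * k ∧ (j : ℕ) = 2 * k + 1) ∨
        ((i : ℕ) = 2 * k + 1 ∧ (j : ℕ) = 2 * k)) :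
      Rel10 n (FreeAlgebra.ι ℝ i * FreeAlgebra.ι ℝ j) (FreeAlgebra.ι ℝ j * FreeAlgebra.ι ℝ i)

/-! The Pauli matrices `Z = diag(1, -1)` and `X = [[0, 1], [1, 0]]` square to `1` and anticommute,
so sending `x_{2k}` to `Z` and `x_{2k+1}` to `X` acting on the `k`-th tensor factor of
`(ℝ²)^{⊗n}` respects the relations and defines `A → M_{2^n}(ℝ)` (with rows and columns indexed by
`Fin n → Fin 2`). It is surjective because `Z` and `X` generate `M₂(ℝ)` and
`M_{2^n}(ℝ) = M₂(ℝ)^{⊗n}`. Conversely, the relations let every monomial in the generators be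
rewritten as a scalar times an increasing product of distinct generators, so
`dim A ≤ 2^{2n} = dim M_{2^n}(ℝ)`, and the surjection is an isomorphism. -/

open scoped symmDiff

namespace Matrix

section KroneckerPi

variable {ι m R : Type*} [Fintype ι] [DecidableEq ι] [Fintype m] [DecidableEq m] [CommSemiring R]

def kroneckerPi : (ι → Matrix m m R) →* Matrix (ι → m) (ι → m) R where
  toFun P := of fun f g => ∏ i, P i (f i) (g i)
  map_one' := by
    ext f g
    simp [one_apply, Finset.prod_boole, funext_iff]
  map_mul' P Q := by
    ext f g
    simp only [of_apply, Pi.mul_apply, mul_apply, Finset.prod_univ_sum, Fintype.piFinset_univ,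
      Finset.prod_mul_distrib]

theorem kroneckerPi_apply (P : ι → Matrix m m R) (f g : ι → m) :
    kroneckerPi P f g = ∏ i, P i (f i) (g i) := rfl

theorem kroneckerPi_single (f g : ι → m) :
    kroneckerPi (fun i => single (f i) (g i) (1 : R)) = single f g 1 := by
  ext f' g'
  simp [kroneckerPi_apply, single_apply, Finset.prod_boole, funext_iff, forall_and]

theorem kroneckerPi_mulSingle_apply (k : ι) (P : Matrix m m R) (f g : ι → m) :
    kroneckerPi (Pi.mulSingle k P) f g =
      P (f k) (g k) * ∏ i ∈ Finset.univ.erase k, (1 : Matrix m m R) (f i) (g i) := by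
  rw [kroneckerPi_apply, ← Finset.mul_prod_erase _ _ (Finset.mem_univ k), Pi.mulSingle_eq_same]
  congr 1
  exact Finset.prod_congr rfl fun i hi => by rw [Pi.mulSingle_eq_of_ne (Finset.ne_of_mem_erase hi)]

def kroneckerPiSingle (k : ι) : Matrix m m R →ₐ[R] Matrix (ι → m) (ι → m) R :=
  AlgHom.ofLinearMap
    { toFun := fun P => kroneckerPi (Pi.mulSingle k P)
      map_add' := fun P Q => by ext f g; simp [kroneckerPi_mulSingle_apply, add_mul]
      map_smul' := fun c P => by ext f g; simp [kroneckerPi_mulSingle_apply, mul_assoc] }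
    (by simp) (fun P Q => by simp [Pi.mulSingle_mul])

theorem kroneckerPiSingle_apply (k : ι) (P : Matrix m m R) :
    kroneckerPiSingle k P = kroneckerPi (Pi.mulSingle k P) := rfl

theorem commute_kroneckerPiSingle {k l : ι} (hkl : k ≠ l) (P Q : Matrix m m R) :
    Commute (kroneckerPiSingle k P) (kroneckerPiSingle l Q) := by
  rw [kroneckerPiSingle_apply, kroneckerPiSingle_apply]
  exact (Pi.mulSingle_commute hkl P Q).map kroneckerPi

theorem kroneckerPi_mem {S : Submonoid (Matrix (ι → m) (ι → m) R)}
    (h : ∀ k P, kroneckerPiSingle k P ∈ S) (P : ι → Matrix m m R) : kroneckerPi P ∈ S := by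
  rw [← Submonoid.mem_comap, ← Finset.noncommProd_mulSingle P]
  exact Submonoid.noncommProd_mem _ _ _ _ fun k _ => h k (P k)

theorem adjoin_iUnion_image_kroneckerPiSingle {T : Set (Matrix m m R)}
    (hT : Algebra.adjoin R T = ⊤) :
    Algebra.adjoin R (⋃ k, kroneckerPiSingle (ι := ι) k '' T) = ⊤ := by
  set B := Algebra.adjoin R (⋃ k, kroneckerPiSingle (ι := ι) k '' T)
  have hsingle : ∀ k P, kroneckerPiSingle k P ∈ B := fun k P => by
    have : Algebra.adjoin R T ≤ B.comap (kroneckerPiSingle k) :=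
      Algebra.adjoin_le fun t ht => Algebra.subset_adjoin (Set.mem_iUnion.2 ⟨k, t, ht, rfl⟩)
    exact this (hT ▸ Algebra.mem_top)
  rw [eq_top_iff]
  rintro M -
  rw [matrix_eq_sum_single M]
  refine B.sum_mem fun f _ => B.sum_mem fun g _ => ?_
  rw [show single f g (M f g) = M f g • single f g 1 by rw [smul_single, smul_eq_mul, mul_one],
    ← kroneckerPi_single]
  exact B.smul_mem (kroneckerPi_mem (S := B.toSubmonoid) hsingle _) _

end KroneckerPi

section Pauli

def pauliZ (R : Type*) [Ring R] : Matrix (Fin 2) (Fin 2) R := !![1, 0; 0, -1]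

def pauliX (R : Type*) [Ring R] : Matrix (Fin 2) (Fin 2) R := !![0, 1; 1, 0]

variable {R : Type*} [Ring R]

theorem pauliZ_mul_self : pauliZ R * pauliZ R = 1 := by
  ext i j; fin_cases i <;> fin_cases j <;> simp [pauliZ]

theorem pauliX_mul_self : pauliX R * pauliX R = 1 := by
  ext i j; fin_cases i <;> fin_cases j <;> simp [pauliX]

theorem pauliZ_mul_pauliX : pauliZ R * pauliX R = -(pauliX R * pauliZ R) := by
  ext i j; fin_cases i <;> fin_cases j <;> simp [pauliZ, pauliX]

theorem adjoin_pauliZ_pauliX (K : Type*) [Field K] [NeZero (2 : K)] :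
    Algebra.adjoin K {pauliZ K, pauliX K} = ⊤ := by
  set B := Algebra.adjoin K {pauliZ K, pauliX K}
  have hZ : pauliZ K ∈ B := Algebra.subset_adjoin (by simp)
  have hX : pauliX K ∈ B := Algebra.subset_adjoin (by simp)
  have h00 : single 0 0 (1 : K) = (2⁻¹ : K) • (1 + pauliZ K) := by
    ext i j; fin_cases i <;> fin_cases j <;>
      simp [pauliZ, one_add_one_eq_two, inv_mul_cancel₀ (two_ne_zero (α := K))]
  have h01 : single 0 1 (1 : K) = single 0 0 1 * pauliX K := by
    ext i j; fin_cases i <;> fin_cases j <;> simp [pauliX, mul_apply, Fin.sum_univ_two]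
  have h10 : single 1 0 (1 : K) = pauliX K * single 0 0 1 := by
    ext i j; fin_cases i <;> fin_cases j <;> simp [pauliX, mul_apply, Fin.sum_univ_two]
  have h11 : single 1 1 (1 : K) = single 1 0 1 * pauliX K := by
    ext i j; fin_cases i <;> fin_cases j <;> simp [pauliX, mul_apply, Fin.sum_univ_two]
  have hE00 : single 0 0 (1 : K) ∈ B := h00 ▸ B.smul_mem (B.add_mem B.one_mem hZ) _
  have hE : ∀ i j : Fin 2, single i j (1 : K) ∈ B := by
    intro i j
    fin_cases i <;> fin_cases j
    · exact hE00
    · exact h01 ▸ B.mul_mem hE00 hX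
    · exact h10 ▸ B.mul_mem hX hE00
    · exact h11 ▸ h10 ▸ B.mul_mem (B.mul_mem hX hE00) hX
  rw [eq_top_iff]
  rintro M -
  rw [matrix_eq_sum_single M]
  refine B.sum_mem fun i _ => B.sum_mem fun j _ => ?_
  rw [show single i j (M i j) = M i j • single i j 1 by rw [smul_single, smul_eq_mul, mul_one]]
  exact B.smul_mem (hE i j) _

end Pauli

end Matrix

section SortedProd

variable {R A ι : Type*} [LinearOrder ι]

def sortedProd [Monoid A] (e : ι → A) (S : Finset ι) : A :=
  (S.sort.map e).prod

section Monoid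

variable [Monoid A] (e : ι → A)

@[simp]
theorem sortedProd_empty : sortedProd e ∅ = 1 := by simp [sortedProd]

@[simp]
theorem sortedProd_singleton (a : ι) : sortedProd e {a} = e a := by simp [sortedProd]

theorem sortedProd_insert {a : ι} {S : Finset ι} (ha : ∀ b ∈ S, a < b) :
    sortedProd e (insert a S) = e a * sortedProd e S := by
  rw [sortedProd, sortedProd, Finset.sort_insert _ (fun b hb => (ha b hb).le)
    (fun h => lt_irrefl a (ha a h)), List.map_cons, List.prod_cons]

end Monoid

variable [CommSemiring R] [Semiring A] [Algebra R A] {e : ι → A}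

/-- `e j` moves left past the smaller generators of `S` at the cost of scalars, and is then
either inserted into the product or absorbed by `e j * e j`. -/
theorem exists_mul_sortedProd_eq_smul (hsq : ∀ i, ∃ c : R, e i * e i = algebraMap R A c)
    (hswap : ∀ i j, ∃ c : R, e i * e j = c • (e j * e i)) (j : ι) (S : Finset ι) :
    ∃ c : R, e j * sortedProd e S = c • sortedProd e (S ∆ {j}) := by
  induction S using Finset.induction_on_min with
  | empty => exact ⟨1, by rw [← Finset.bot_eq_empty, bot_symmDiff]; simp⟩
  | insert a S ha ih =>
    rw [sortedProd_insert e ha]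
    rcases lt_trichotomy j a with hja | rfl | haj
    · have hjS : ∀ b ∈ insert a S, j < b := by
        simpa [hja] using fun b hb => hja.trans (ha b hb)
      refine ⟨1, ?_⟩
      rw [one_smul, ← sortedProd_insert e ha, ← sortedProd_insert e hjS]
      congr 1
      ext b
      simp only [Finset.mem_symmDiff, Finset.mem_insert, Finset.mem_singleton]
      grind
    · obtain ⟨c, hc⟩ := hsq j
      refine ⟨c, ?_⟩
      rw [← mul_assoc, hc, ← Algebra.smul_def]
      congr 2
      ext b
      simp only [Finset.mem_symmDiff, Finset.mem_insert, Finset.mem_singleton]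
      grind
    · obtain ⟨c₀, hc₀⟩ := hswap j a
      obtain ⟨c₁, hc₁⟩ := ih
      have hT : ∀ b ∈ S ∆ {j}, a < b := by
        intro b hb
        simp only [Finset.mem_symmDiff, Finset.mem_singleton] at hb
        grind
      refine ⟨c₀ * c₁, ?_⟩
      rw [← mul_assoc, hc₀, smul_mul_assoc, mul_assoc, hc₁, mul_smul_comm, smul_smul,
        ← sortedProd_insert e hT]
      congr 2
      ext b
      simp only [Finset.mem_symmDiff, Finset.mem_insert, Finset.mem_singleton]
      grind

theorem span_range_sortedProd_eq_top (hgen : Algebra.adjoin R (Set.range e) = ⊤)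
    (hsq : ∀ i, ∃ c : R, e i * e i = algebraMap R A c)
    (hswap : ∀ i j, ∃ c : R, e i * e j = c • (e j * e i)) :
    Submodule.span R (Set.range (sortedProd e)) = ⊤ := by
  have hmul : ∀ j, Submodule.span R (Set.range (sortedProd e)) ≤
      (Submodule.span R (Set.range (sortedProd e))).comap (LinearMap.mulLeft R (e j)) :=
    fun j => Submodule.span_le.2 <| by
      rintro _ ⟨S, rfl⟩
      obtain ⟨c, hc⟩ := exists_mul_sortedProd_eq_smul hsq hswap j S
      rw [SetLike.mem_coe, Submodule.mem_comap, LinearMap.mulLeft_apply, hc]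
      exact Submodule.smul_mem _ c (Submodule.subset_span ⟨_, rfl⟩)
  rw [eq_top_iff, ← Algebra.top_toSubmodule, ← hgen, Algebra.adjoin_eq_span, Submodule.span_le]
  intro x hx
  induction hx using Submonoid.closure_induction_left with
  | one => exact Submodule.subset_span ⟨∅, sortedProd_empty e⟩
  | mul_left _ hx _ _ ih => obtain ⟨j, rfl⟩ := hx; exact hmul j ih

end SortedProd

open Matrix

noncomputable def twistedGen (n : ℕ) (i : Fin (2 * n)) : RingQuot (Rel10 n) :=
  RingQuot.mkAlgHom ℝ (Rel10 n) (FreeAlgebra.ι ℝ i)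

theorem adjoin_range_twistedGen (n : ℕ) : Algebra.adjoin ℝ (Set.range (twistedGen n)) = ⊤ := by
  rw [show twistedGen n = RingQuot.mkAlgHom ℝ (Rel10 n) ∘ FreeAlgebra.ι ℝ from rfl,
    Set.range_comp, ← AlgHom.map_adjoin, FreeAlgebra.adjoin_range_ι, Algebra.map_top,
    AlgHom.range_eq_top]
  exact RingQuot.mkAlgHom_surjective ℝ (Rel10 n)

theorem twistedGen_mul_self {n : ℕ} (i : Fin (2 * n)) : twistedGen n i * twistedGen n i = 1 := by
  simpa [twistedGen] using RingQuot.mkAlgHom_rel ℝ (Rel10.sq i)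

theorem twistedGen_anticomm {n k : ℕ} (hk : k < n) :
    twistedGen n ⟨2 * k, by omega⟩ * twistedGen n ⟨2 * k + 1, by omega⟩ =
      -(twistedGen n ⟨2 * k + 1, by omega⟩ * twistedGen n ⟨2 * k, by omega⟩) := by
  simpa [twistedGen] using RingQuot.mkAlgHom_rel ℝ (Rel10.anti k hk)

theorem exists_twistedGen_mul_eq_smul {n : ℕ} (i j : Fin (2 * n)) :
    ∃ c : ℝ, twistedGen n i * twistedGen n j = c • (twistedGen n j * twistedGen n i) := by
  by_cases hpair : ∃ k : ℕ, ((i : ℕ) = 2 * k ∧ (j : ℕ) = 2 * k + 1) ∨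
      ((i : ℕ) = 2 * k + 1 ∧ (j : ℕ) = 2 * k)
  · refine ⟨-1, ?_⟩
    obtain ⟨i, hi⟩ := i
    obtain ⟨j, hj⟩ := j
    obtain ⟨k, ⟨rfl, rfl⟩ | ⟨rfl, rfl⟩⟩ := hpair
    · rw [twistedGen_anticomm (by omega)]
      exact (neg_one_smul ℝ _).symm
    · rw [twistedGen_anticomm (by omega)]
      exact ((neg_one_smul ℝ (-(twistedGen n _ * twistedGen n _))).trans (neg_neg _)).symm
  · by_cases hij : i = j
    · exact ⟨1, by rw [hij, one_smul]⟩
    · exact ⟨1, by simpa [twistedGen] using RingQuot.mkAlgHom_rel ℝ (Rel10.comm i j hij hpair)⟩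

noncomputable def pauliGen (n : ℕ) (i : Fin (2 * n)) : Matrix (Fin n → Fin 2) (Fin n → Fin 2) ℝ :=
  kroneckerPiSingle ⟨i / 2, by omega⟩ (if (i : ℕ) % 2 = 0 then pauliZ ℝ else pauliX ℝ)

theorem pauliGen_two_mul {n k : ℕ} (hk : k < n) :
    pauliGen n ⟨2 * k, by omega⟩ = kroneckerPiSingle ⟨k, hk⟩ (pauliZ ℝ) := by
  simp [pauliGen]

theorem pauliGen_two_mul_add_one {n k : ℕ} (hk : k < n) :
    pauliGen n ⟨2 * k + 1, by omega⟩ = kroneckerPiSingle ⟨k, hk⟩ (pauliX ℝ) := by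
  have hdiv : (2 * k + 1) / 2 = k := by omega
  simp [pauliGen, hdiv]

theorem pauliGen_mul_self {n : ℕ} (i : Fin (2 * n)) : pauliGen n i * pauliGen n i = 1 := by
  rw [pauliGen, ← map_mul]
  split_ifs <;> simp [pauliZ_mul_self, pauliX_mul_self]

theorem pauliGen_respects_rel {n : ℕ} ⦃x y : FreeAlgebra ℝ (Fin (2 * n))⦄ (h : Rel10 n x y) :
    FreeAlgebra.lift ℝ (pauliGen n) x = FreeAlgebra.lift ℝ (pauliGen n) y := by
  induction h with
  | sq i => simpa using pauliGen_mul_self i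
  | anti k hk =>
    simp only [map_mul, map_neg, FreeAlgebra.lift_ι_apply, pauliGen_two_mul hk,
      pauliGen_two_mul_add_one hk]
    rw [← map_mul, ← map_mul, ← map_neg, pauliZ_mul_pauliX]
  | comm i j hij h =>
    simp only [map_mul, FreeAlgebra.lift_ι_apply]
    refine commute_kroneckerPiSingle (fun hk => h ⟨i / 2, ?_⟩) _ _
    have hdiv : (i : ℕ) / 2 = j / 2 := Fin.mk.inj_iff.1 hk
    have hne : (i : ℕ) ≠ j := Fin.val_ne_of_ne hij
    omega

noncomputable def pauliRep (n : ℕ) :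
    RingQuot (Rel10 n) →ₐ[ℝ] Matrix (Fin n → Fin 2) (Fin n → Fin 2) ℝ :=
  RingQuot.liftAlgHom ℝ ⟨FreeAlgebra.lift ℝ (pauliGen n), pauliGen_respects_rel⟩

theorem pauliRep_twistedGen {n : ℕ} (i : Fin (2 * n)) :
    pauliRep n (twistedGen n i) = pauliGen n i := by
  rw [pauliRep, twistedGen, RingQuot.liftAlgHom_mkAlgHom_apply, FreeAlgebra.lift_ι_apply]

theorem pauliRep_surjective (n : ℕ) : Function.Surjective (pauliRep n) := by
  rw [← AlgHom.range_eq_top, eq_top_iff,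
    ← adjoin_iUnion_image_kroneckerPiSingle (adjoin_pauliZ_pauliX ℝ), Algebra.adjoin_le_iff]
  simp only [Set.iUnion_subset_iff, Set.image_subset_iff]
  rintro ⟨k, hk⟩ P (rfl | rfl)
  · exact ⟨_, (pauliRep_twistedGen _).trans (pauliGen_two_mul hk)⟩
  · exact ⟨_, (pauliRep_twistedGen _).trans (pauliGen_two_mul_add_one hk)⟩

theorem twisted_mu0_even_iso_matrix_real (n : ℕ) :
    Nonempty (RingQuot (Rel10 n) ≃ₐ[ℝ] Matrix (Fin (2 ^ n)) (Fin (2 ^ n)) ℝ) := by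
  have hspan := span_range_sortedProd_eq_top (adjoin_range_twistedGen n)
    (fun i => ⟨1, by rw [twistedGen_mul_self, map_one]⟩) exists_twistedGen_mul_eq_smul
  have : Module.Finite ℝ (RingQuot (Rel10 n)) := ⟨hspan ▸ Submodule.fg_span (Set.finite_range _)⟩
  have hdim : Module.finrank ℝ (RingQuot (Rel10 n)) ≤
      Module.finrank ℝ (Matrix (Fin n → Fin 2) (Fin n → Fin 2) ℝ) :=
    calc Module.finrank ℝ (RingQuot (Rel10 n)) ≤ Fintype.card (Finset (Fin (2 * n))) :=
          finrank_le_of_span_eq_top hspan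
      _ = Module.finrank ℝ (Matrix (Fin n → Fin 2) (Fin n → Fin 2) ℝ) := by
          rw [Fintype.card_finset, Module.finrank_matrix]
          simp [two_mul, pow_add]
  have hbij := OrzechProperty.bijective_of_surjective_of_finrank_le (pauliRep n).toLinearMap
    (pauliRep_surjective n) hdim
  exact ⟨(AlgEquiv.ofBijective (pauliRep n) hbij).trans
    (reindexAlgEquiv ℝ ℝ (Fintype.equivFinOfCardEq (by simp)))⟩
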